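/- arXiv:1606.00873 — 2 statements merged into one kernel-verified Lean document; each statement's English description precedes it below -/
import Mathlib

section
/- Suppose 0 ≤ u₀ ∈ L¹(ℝ^N) is measurable, M = ∫ u₀ > 0, and u₀ is supported in B_{R_M}(0) at least up to mass M/2, i.e. ∫_{B_{R_M}(0)} u₀ ≥ M/2 for some R_M > 0. Let K(x) = (1+|x|²)^{-(N+2s)/2}. Then there is k₀ = k₀(N, s, R_M) > 0 such that for all x ∈ ℝ^N, (K * u₀)(x) ≥ k₀ M (1+|x|²)^{-(N+2s)/2}. -/
/-!
The translate `K(x - ·)` is bounded below on `B_R` by a multiple of `K(x)`, by Peetre's inequality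
`1 + ‖x - y‖² ≤ 2 (1 + ‖x‖²) (1 + ‖y‖²)`: for `‖y‖ ≤ R` one gets
`K(x - y) ≥ (2 (1 + R²))^{-(N+2s)/2} K(x)`. Restricting the convolution integral to `B_R`, which
carries at least half the mass, gives the bound with `k₀ = (2 (1 + R²))^{-(N+2s)/2} / 2`.
-/

open MeasureTheory

section Kernel

variable {E : Type*} [SeminormedAddCommGroup E]

theorem one_add_sq_norm_sub_le (x y : E) :
    1 + ‖x - y‖ ^ 2 ≤ 2 * (1 + ‖y‖ ^ 2) * (1 + ‖x‖ ^ 2) := by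
  have hxy : ‖x - y‖ ≤ ‖x‖ + ‖y‖ := norm_sub_le x y
  nlinarith [norm_nonneg x, norm_nonneg y, norm_nonneg (x - y), sq_nonneg (‖x‖ - ‖y‖),
    mul_nonneg (sq_nonneg ‖x‖) (sq_nonneg ‖y‖)]

theorem one_add_sq_norm_rpow_neg_le_one {p : ℝ} (hp : 0 ≤ p) (z : E) :
    (1 + ‖z‖ ^ 2) ^ (-p) ≤ 1 :=
  Real.rpow_le_one_of_one_le_of_nonpos (by nlinarith [sq_nonneg ‖z‖]) (neg_nonpos.mpr hp)

theorem rpow_neg_mul_le_one_add_sq_norm_sub_rpow_neg {p R : ℝ} (hp : 0 ≤ p) {x y : E}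
    (hy : ‖y‖ ≤ R) :
    (2 * (1 + R ^ 2)) ^ (-p) * (1 + ‖x‖ ^ 2) ^ (-p) ≤ (1 + ‖x - y‖ ^ 2) ^ (-p) := by
  have hyR : ‖y‖ ^ 2 ≤ R ^ 2 := pow_le_pow_left₀ (norm_nonneg y) hy 2
  rw [← Real.mul_rpow (by positivity) (by positivity)]
  refine Real.rpow_le_rpow_of_nonpos (by positivity) ?_ (neg_nonpos.mpr hp)
  calc 1 + ‖x - y‖ ^ 2 ≤ 2 * (1 + ‖y‖ ^ 2) * (1 + ‖x‖ ^ 2) := one_add_sq_norm_sub_le x y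
    _ ≤ 2 * (1 + R ^ 2) * (1 + ‖x‖ ^ 2) := by gcongr

variable [MeasurableSpace E] [OpensMeasurableSpace E]

theorem integrable_one_add_sq_norm_sub_rpow_neg_mul {p : ℝ} (hp : 0 ≤ p) (x : E) {μ : Measure E}
    {u : E → ℝ} (hu : Integrable u μ) :
    Integrable (fun y => (1 + ‖x - y‖ ^ 2) ^ (-p) * u y) μ := by
  have hcont : Continuous fun y : E => (1 + ‖x - y‖ ^ 2) ^ (-p) :=
    (by fun_prop : Continuous fun y : E => 1 + ‖x - y‖ ^ 2).rpow_const
      fun y => Or.inl (by positivity)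
  refine hu.bdd_mul (c := 1) hcont.aestronglyMeasurable (Filter.Eventually.of_forall fun y => ?_)
  rw [Real.norm_of_nonneg (by positivity)]
  exact one_add_sq_norm_rpow_neg_le_one hp (x - y)

end Kernel

theorem const_mul_setIntegral_le_integral_mul {α : Type*} [MeasurableSpace α] {μ : Measure α}
    {f g : α → ℝ} {s : Set α} {c : ℝ} (hs : MeasurableSet s) (hf : Integrable f μ)
    (hgf : Integrable (fun y => g y * f y) μ) (hf0 : ∀ y, 0 ≤ f y) (hg0 : ∀ y, 0 ≤ g y)
    (hcg : ∀ y ∈ s, c ≤ g y) :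
    c * ∫ y in s, f y ∂μ ≤ ∫ y, g y * f y ∂μ :=
  calc c * ∫ y in s, f y ∂μ = ∫ y in s, c * f y ∂μ := (integral_const_mul c _).symm
    _ ≤ ∫ y in s, g y * f y ∂μ :=
      setIntegral_mono_on (hf.integrableOn.const_mul c) hgf.integrableOn hs
        fun y hy => mul_le_mul_of_nonneg_right (hcg y hy) (hf0 y)
    _ ≤ ∫ y, g y * f y ∂μ :=
      setIntegral_le_integral hgf (Filter.Eventually.of_forall fun y => mul_nonneg (hg0 y) (hf0 y))

theorem stmt7_general (N : ℕ) (s : ℝ) (hs0 : 0 < s)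
    (R_M : ℝ) :
    ∃ k₀ : ℝ, 0 < k₀ ∧
      ∀ (u₀ : EuclideanSpace ℝ (Fin N) → ℝ), Measurable u₀ → (∀ y, 0 ≤ u₀ y) →
        Integrable u₀ → 0 < ∫ y, u₀ y →
        (∫ y in Metric.ball (0 : EuclideanSpace ℝ (Fin N)) R_M, u₀ y) ≥ (∫ y, u₀ y) / 2 →
        ∀ x : EuclideanSpace ℝ (Fin N),
          k₀ * (∫ y, u₀ y) * (1 + ‖x‖ ^ 2) ^ (-((N : ℝ) + 2 * s) / 2) ≤
            ∫ y, (1 + ‖x - y‖ ^ 2) ^ (-((N : ℝ) + 2 * s) / 2) * u₀ y := by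
  set p : ℝ := ((N : ℝ) + 2 * s) / 2
  have hp : 0 ≤ p := by positivity
  rw [show -((N : ℝ) + 2 * s) / 2 = -p by ring]
  refine ⟨(2 * (1 + R_M ^ 2)) ^ (-p) / 2, by positivity, ?_⟩
  intro u₀ _ hu₀ hint _ hball x
  set c := (2 * (1 + R_M ^ 2)) ^ (-p) * (1 + ‖x‖ ^ 2) ^ (-p)
  calc (2 * (1 + R_M ^ 2)) ^ (-p) / 2 * (∫ y, u₀ y) * (1 + ‖x‖ ^ 2) ^ (-p)
        = c * ((∫ y, u₀ y) / 2) := by ring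
    _ ≤ c * ∫ y in Metric.ball 0 R_M, u₀ y := by gcongr
    _ ≤ ∫ y, (1 + ‖x - y‖ ^ 2) ^ (-p) * u₀ y :=
      const_mul_setIntegral_le_integral_mul Metric.isOpen_ball.measurableSet hint
        (integrable_one_add_sq_norm_sub_rpow_neg_mul hp x hint) hu₀ (fun y => by positivity)
        fun y hy => rpow_neg_mul_le_one_add_sq_norm_sub_rpow_neg hp (mem_ball_zero_iff.mp hy).le

theorem stmt7 (N : ℕ) (hN : 1 ≤ N) (s : ℝ) (hs0 : 0 < s) (hs1 : s < 1)
    (R_M : ℝ) (hR : 0 < R_M) :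
    ∃ k₀ : ℝ, 0 < k₀ ∧
      ∀ (u₀ : EuclideanSpace ℝ (Fin N) → ℝ), Measurable u₀ → (∀ y, 0 ≤ u₀ y) →
        Integrable u₀ → 0 < ∫ y, u₀ y →
        (∫ y in Metric.ball (0 : EuclideanSpace ℝ (Fin N)) R_M, u₀ y) ≥ (∫ y, u₀ y) / 2 →
        ∀ x : EuclideanSpace ℝ (Fin N),
          k₀ * (∫ y, u₀ y) * (1 + ‖x‖ ^ 2) ^ (-((N : ℝ) + 2 * s) / 2) ≤
            ∫ y, (1 + ‖x - y‖ ^ 2) ^ (-((N : ℝ) + 2 * s) / 2) * u₀ y :=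
  stmt7_general N s hs0 R_M
end

section
/- Let K(x) = (1+|x|²)^{-(N+2s)/2} and let u₀ : ℝ^N → [0,∞) be integrable with ‖u₀‖_{L¹} = 1, and suppose u₀(y) ≤ (1+|y|²)^{-(N+2s)/2} for all |y| ≥ R₀ ≥ 1. Then there is a constant C = C(N,s,R₀) such that for all x ∈ ℝ^N with |x| ≥ R₀, (K * u₀)(x) ≤ C (1+|x|²)^{-(N+2s)/2}. -/
set_option maxHeartbeats 1000000


open MeasureTheory

theorem stmt8 (N : ℕ) (hN : 1 ≤ N) (s : ℝ) (hs0 : 0 < s) (hs1 : s < 1)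
    (R₀ : ℝ) (hR₀ : 1 ≤ R₀) :
    ∃ C : ℝ, 0 < C ∧
      ∀ (u₀ : EuclideanSpace ℝ (Fin N) → ℝ), Measurable u₀ → (∀ y, 0 ≤ u₀ y) →
        Integrable u₀ → (∫ y, u₀ y) = 1 →
        (∀ y : EuclideanSpace ℝ (Fin N), R₀ ≤ ‖y‖ →
          u₀ y ≤ (1 + ‖y‖ ^ 2) ^ (-((N : ℝ) + 2 * s) / 2)) →
        ∀ x : EuclideanSpace ℝ (Fin N), R₀ ≤ ‖x‖ →
          (∫ y, (1 + ‖x - y‖ ^ 2) ^ (-((N : ℝ) + 2 * s) / 2) * u₀ y) ≤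
            C * (1 + ‖x‖ ^ 2) ^ (-((N : ℝ) + 2 * s) / 2) := by
  have hN' : (1 : ℝ) ≤ (N : ℝ) := by exact_mod_cast hN
  set q : ℝ := -((N : ℝ) + 2 * s) / 2 with hq
  have hqneg : q < 0 := by rw [hq]; nlinarith
  -- integrability of the kernel
  have hKint : Integrable (fun y : EuclideanSpace ℝ (Fin N) => (1 + ‖y‖ ^ 2) ^ q) := by
    have h := integrable_rpow_neg_one_add_norm_sq
      (E := EuclideanSpace ℝ (Fin N)) (μ := volume) (r := (N : ℝ) + 2 * s)
      (by rw [finrank_euclideanSpace_fin]; nlinarith)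
    simpa [hq, neg_div] using h
  set I : ℝ := ∫ y : EuclideanSpace ℝ (Fin N), (1 + ‖y‖ ^ 2) ^ q with hI
  have hI0 : 0 ≤ I := integral_nonneg fun y => Real.rpow_nonneg (by positivity) _
  set M : ℝ := (1 + 4 * R₀ ^ 2) ^ (-q) with hM
  have hMpos : 0 < M := Real.rpow_pos_of_pos (by positivity) _
  have h4M : (4 : ℝ) ^ (-q) ≤ M := by
    apply Real.rpow_le_rpow (by norm_num) (by nlinarith) (by linarith)
  refine ⟨M * (1 + I), by positivity, ?_⟩
  intro u₀ hmeas hpos hint hnorm hbd x hx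
  have hxpos : (0 : ℝ) < 1 + ‖x‖ ^ 2 := by positivity
  set Kx : ℝ := (1 + ‖x‖ ^ 2) ^ q with hKx
  have hKxpos : 0 < Kx := Real.rpow_pos_of_pos hxpos _
  -- key comparison: if (1+‖x‖²)/4 ≤ a then a^q ≤ M * Kx
  have key : ∀ a : ℝ, 0 < a → (1 + ‖x‖ ^ 2) / 4 ≤ a → a ^ q ≤ M * Kx := by
    intro a ha hle
    have h1 : a ^ q ≤ ((1 + ‖x‖ ^ 2) / 4) ^ q :=
      Real.rpow_le_rpow_of_nonpos (by positivity) hle hqneg.le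
    have h2 : ((1 + ‖x‖ ^ 2) / 4) ^ q = (4 : ℝ) ^ (-q) * Kx := by
      rw [Real.div_rpow hxpos.le (by norm_num), Real.rpow_neg (by norm_num)]
      rw [div_eq_mul_inv, mul_comm]
    calc a ^ q ≤ (4:ℝ) ^ (-q) * Kx := by rw [← h2]; exact h1
      _ ≤ M * Kx := by gcongr
  -- pointwise bound
  have hpt : ∀ y : EuclideanSpace ℝ (Fin N),
      (1 + ‖x - y‖ ^ 2) ^ q * u₀ y ≤ M * Kx * (u₀ y + (1 + ‖x - y‖ ^ 2) ^ q) := by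
    intro y
    have hxy0 : (0 : ℝ) < 1 + ‖x - y‖ ^ 2 := by positivity
    have hKxy0 : (0 : ℝ) ≤ (1 + ‖x - y‖ ^ 2) ^ q := Real.rpow_nonneg hxy0.le _
    rcases le_or_gt ‖y‖ (‖x‖ / 2) with hy | hy
    · -- far from singularity: K(x-y) ≤ M Kx
      have h1 : ‖x‖ / 2 ≤ ‖x - y‖ := by
        have := norm_sub_norm_le x y
        linarith [abs_le.mp (le_refl |‖x‖ - ‖y‖|) ]
      have h2 : (1 + ‖x‖ ^ 2) / 4 ≤ 1 + ‖x - y‖ ^ 2 := by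
        have hx0 : 0 ≤ ‖x‖ := norm_nonneg x
        nlinarith [norm_nonneg (x - y)]
      have h3 := key _ hxy0 h2
      have := hpos y
      nlinarith
    · rcases le_or_gt R₀ ‖y‖ with hy2 | hy2
      · -- pointwise decay: u₀ y ≤ K(y) ≤ M Kx
        have hbdy := hbd y hy2
        have h2 : (1 + ‖x‖ ^ 2) / 4 ≤ 1 + ‖y‖ ^ 2 := by
          have hx0 : 0 ≤ ‖x‖ := norm_nonneg x
          nlinarith
        have h3 : u₀ y ≤ M * Kx := le_trans hbdy (key _ (by positivity) h2)
        have := hpos y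
        nlinarith
      · -- ‖x‖ < 2 R₀ : M Kx ≥ 1 and K(x-y) ≤ 1
        have hxlt : ‖x‖ < 2 * R₀ := by linarith
        have h1 : (1 + ‖x - y‖ ^ 2) ^ q ≤ 1 :=
          Real.rpow_le_one_of_one_le_of_nonpos (by nlinarith [sq_nonneg ‖x - y‖]) hqneg.le
        have h2 : (1 : ℝ) ≤ M * Kx := by
          have hle : 1 + ‖x‖ ^ 2 ≤ 1 + 4 * R₀ ^ 2 := by nlinarith [norm_nonneg x]
          have : (1 + ‖x‖ ^ 2) ^ (-q) ≤ M :=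
            Real.rpow_le_rpow hxpos.le hle (by linarith)
          have hid : (1 + ‖x‖ ^ 2) ^ (-q) * Kx = 1 := by
            rw [hKx, ← Real.rpow_add hxpos]; simp
          calc (1:ℝ) = (1 + ‖x‖ ^ 2) ^ (-q) * Kx := hid.symm
            _ ≤ M * Kx := by gcongr
        have := hpos y
        nlinarith
  -- integrability of translated kernel
  have hKxyint : Integrable (fun y : EuclideanSpace ℝ (Fin N) => (1 + ‖x - y‖ ^ 2) ^ q) :=
    hKint.comp_sub_left x
  have hrhs : Integrable (fun y : EuclideanSpace ℝ (Fin N) =>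
      M * Kx * (u₀ y + (1 + ‖x - y‖ ^ 2) ^ q)) := (hint.add hKxyint).const_mul _
  have hmono : (∫ y, (1 + ‖x - y‖ ^ 2) ^ q * u₀ y) ≤
      ∫ y, M * Kx * (u₀ y + (1 + ‖x - y‖ ^ 2) ^ q) := by
    apply integral_mono_of_nonneg
    · exact Filter.Eventually.of_forall fun y =>
        mul_nonneg (Real.rpow_nonneg (by positivity) _) (hpos y)
    · exact hrhs
    · exact Filter.Eventually.of_forall hpt
  have htrans : (∫ y : EuclideanSpace ℝ (Fin N), (1 + ‖x - y‖ ^ 2) ^ q) = I := by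
    rw [hI]
    exact integral_sub_left_eq_self (fun y : EuclideanSpace ℝ (Fin N) => (1 + ‖y‖ ^ 2) ^ q)
      volume x
  have hval : (∫ y, M * Kx * (u₀ y + (1 + ‖x - y‖ ^ 2) ^ q)) = M * Kx * (1 + I) := by
    rw [integral_const_mul, integral_add hint hKxyint, htrans, hnorm]
  calc (∫ y, (1 + ‖x - y‖ ^ 2) ^ q * u₀ y)
      ≤ M * Kx * (1 + I) := by rw [← hval]; exact hmono
    _ = M * (1 + I) * Kx := by ring
end
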